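/- arXiv:1604.00182 — 4 statements merged into one kernel-verified Lean document; each statement's English description precedes it below -/
import Mathlib

section
/- The matrix F̂(r,s)⁻¹ with entries (1/r)(−s/r)^{n−k} · f_{n+1}²/(f_k f_{k+1}) for 0 ≤ k ≤ n and 0 otherwise is the two-sided inverse of the band matrix F̂(r,s); equivalently, if y_0 = r x_0 and y_n = r (f_n/f_{n+1}) x_n + s (f_{n+1}/f_n) x_{n−1} for n ≥ 1, then x_k = ∑_{j=0}^{k} (1/r)(−s/r)^{k−j} · f_{k+1}²/(f_j f_{j+1}) · y_j for all k. -/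
open scoped BigOperators
open Filter

noncomputable def fibs (n : ℕ) : ℝ := (Nat.fib (n + 1) : ℝ)

noncomputable def Fhat (r s : ℝ) (x : ℕ → ℝ) : ℕ → ℝ
  | 0 => r * x 0
  | n + 1 => r * (fibs (n + 1) / fibs (n + 2)) * x (n + 1)
      + s * (fibs (n + 2) / fibs (n + 1)) * x n

/-! Rescaling `x n` by `fibs (n + 1) ^ 2` and the `n`-th output of `Fhat` by
`fibs n * fibs (n + 1)` turns `Fhat r s` into the Toeplitz bidiagonal operator
`z ↦ (r z₀, r z₁ + s z₀, r z₂ + s z₁, …)`, whose inverse is the Toeplitz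
triangular matrix with entries `(1 / r) (-s / r) ^ (n - k)`. -/

theorem eq_sum_of_bidiagonal_toeplitz {K : Type*} [Field K] {r s : K} (hr : r ≠ 0)
    {z w : ℕ → K} (h_zero : w 0 = r * z 0) (h_succ : ∀ n, w (n + 1) = r * z (n + 1) + s * z n)
    (k : ℕ) :
    z k = ∑ j ∈ Finset.range (k + 1), (1 / r) * (-s / r) ^ (k - j) * w j := by
  induction k with
  | zero => simp [h_zero, hr]
  | succ k ih =>
    have h_shift : ∑ j ∈ Finset.range (k + 1), (1 / r) * (-s / r) ^ (k + 1 - j) * w j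
        = (-s / r) * ∑ j ∈ Finset.range (k + 1), (1 / r) * (-s / r) ^ (k - j) * w j := by
      rw [Finset.mul_sum]
      refine Finset.sum_congr rfl fun j hj => ?_
      rw [Nat.sub_add_comm (Finset.mem_range_succ_iff.mp hj), pow_succ]
      ring
    rw [Finset.sum_range_succ, h_shift, ← ih, Nat.sub_self, h_succ]
    field_simp
    ring

lemma fibs_pos (n : ℕ) : 0 < fibs n := by
  unfold fibs
  exact_mod_cast Nat.fib_pos.2 (Nat.succ_pos n)

lemma fibs_ne_zero (n : ℕ) : fibs n ≠ 0 := (fibs_pos n).ne'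

lemma Fhat_zero_div (r s : ℝ) (x : ℕ → ℝ) :
    Fhat r s x 0 / (fibs 0 * fibs 1) = r * (x 0 / fibs 1 ^ 2) := by
  simp [Fhat, fibs]

lemma Fhat_succ_div (r s : ℝ) (x : ℕ → ℝ) (n : ℕ) :
    Fhat r s x (n + 1) / (fibs (n + 1) * fibs (n + 2))
      = r * (x (n + 1) / fibs (n + 2) ^ 2) + s * (x n / fibs (n + 1) ^ 2) := by
  have h₁ := fibs_ne_zero (n + 1)
  have h₂ := fibs_ne_zero (n + 2)
  simp only [Fhat]
  field_simp

theorem Fhat_inverse_general (r s : ℝ) (hr : r ≠ 0) (x : ℕ → ℝ) (k : ℕ) :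
    x k = ∑ j ∈ Finset.range (k + 1),
      (1 / r) * (-s / r) ^ (k - j) * (fibs (k + 1) ^ 2 / (fibs j * fibs (j + 1)))
        * Fhat r s x j := by
  have h_scaled := eq_sum_of_bidiagonal_toeplitz hr (z := fun n => x n / fibs (n + 1) ^ 2)
    (w := fun n => Fhat r s x n / (fibs n * fibs (n + 1)))
    (Fhat_zero_div r s x) (Fhat_succ_div r s x) k
  have h_fib := fibs_ne_zero (k + 1)
  calc x k = fibs (k + 1) ^ 2 * (x k / fibs (k + 1) ^ 2) := by field_simp
    _ = _ := by
      rw [h_scaled, Finset.mul_sum]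
      refine Finset.sum_congr rfl fun j _ => ?_
      ring

theorem Fhat_inverse (r s : ℝ) (hr : r ≠ 0) (hs : s ≠ 0) (x : ℕ → ℝ) (k : ℕ) :
    x k = ∑ j ∈ Finset.range (k + 1),
      (1 / r) * (-s / r) ^ (k - j) * (fibs (k + 1) ^ 2 / (fibs j * fibs (j + 1)))
        * Fhat r s x j :=
  Fhat_inverse_general r s hr x k
end

section
/- For 1 ≤ p < ∞ and nonzero reals r, s with |r| ≤ 1, |s| ≤ 1/2, and |s/r| ≥ 1, every x ∈ ℓ_p satisfies x ∈ ℓ_p(F̂(r,s)) with ‖x‖_{ℓ_p(F̂(r,s))} ≤ (|r| + 2|s|) ‖x‖_p, and the inclusion ℓ_p ⊂ ℓ_p(F̂(r,s)) is strict. -/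
open scoped BigOperators
open Filter

lemma one_le_fibs (n : ℕ) : 1 ≤ fibs n := by
  unfold fibs
  have := Nat.fib_pos.mpr (Nat.succ_pos n)
  exact_mod_cast this

lemma fibs_le_succ (n : ℕ) : fibs n ≤ fibs (n + 1) := by
  unfold fibs
  exact_mod_cast Nat.fib_le_fib_succ

lemma fibs_succ_le (n : ℕ) : fibs (n + 1) ≤ 2 * fibs n := by
  unfold fibs
  have h : Nat.fib (n + 2) = Nat.fib n + Nat.fib (n + 1) := Nat.fib_add_two
  have h2 : (Nat.fib n : ℝ) ≤ Nat.fib (n + 1) := by exact_mod_cast Nat.fib_le_fib_succ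
  push_cast [h]
  linarith

noncomputable def badx (c : ℝ) : ℕ → ℝ
  | 0 => 1
  | n + 1 => c * (fibs (n + 2) / fibs (n + 1)) ^ 2 * badx c n

theorem lp_subset_lpFhat (r s : ℝ) (hr : r ≠ 0) (hs : s ≠ 0) (p : ℝ) (hp : 1 ≤ p)
    (h1 : |r| ≤ 1) (h2 : |s| ≤ 1 / 2) (h3 : 1 ≤ |s / r|) :
    (∀ x : ℕ → ℝ, Summable (fun k => |x k| ^ p) →
      Summable (fun k => |Fhat r s x k| ^ p) ∧
      (∑' k, |Fhat r s x k| ^ p) ^ (1 / p) ≤ (|r| + 2 * |s|) * (∑' k, |x k| ^ p) ^ (1 / p)) ∧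
    ∃ x : ℕ → ℝ, Summable (fun k => |Fhat r s x k| ^ p) ∧ ¬ Summable (fun k => |x k| ^ p) := by
  have hp0 : 0 < p := lt_of_lt_of_le one_pos hp
  have hp0' : (0:ℝ) ≤ p := le_of_lt hp0
  constructor
  · intro x hx
    set A : ℕ → ℝ := fun k => |r| * |x k| with hA
    set B : ℕ → ℝ := fun k => if k = 0 then 0 else 2 * |s| * |x (k - 1)| with hB
    have hAnn : ∀ k, 0 ≤ A k := fun k => mul_nonneg (abs_nonneg _) (abs_nonneg _)
    have hBnn : ∀ k, 0 ≤ B k := by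
      intro k
      simp only [hB]
      split
      · exact le_refl 0
      · positivity
    -- summability of A^p
    have hApow : ∀ k, A k ^ p = |r| ^ p * |x k| ^ p := fun k =>
      Real.mul_rpow (abs_nonneg _) (abs_nonneg _)
    have hAsum : Summable fun k => A k ^ p := by
      simp only [hApow]
      exact hx.mul_left _
    -- summability of B^p
    have hBpow : ∀ k, B (k + 1) ^ p = (2 * |s|) ^ p * |x k| ^ p := by
      intro k
      simp only [hB, Nat.add_sub_cancel, if_neg (Nat.succ_ne_zero k)]
      exact Real.mul_rpow (by positivity) (abs_nonneg _)
    have hBsum : Summable fun k => B k ^ p := by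
      rw [← summable_nat_add_iff 1]
      simp only [hBpow]
      exact hx.mul_left _
    -- pointwise bound
    have hpt : ∀ k, |Fhat r s x k| ≤ A k + B k := by
      intro k
      cases k with
      | zero =>
        simp only [Fhat, hA, hB, if_pos rfl, abs_mul, add_zero, le_refl]
      | succ n =>
        have hf := fibs_pos (n + 1)
        have hg := fibs_pos (n + 2)
        have hd1 : fibs (n + 1) / fibs (n + 2) ≤ 1 :=
          (div_le_one hg).mpr (fibs_le_succ (n + 1))
        have hd1' : 0 < fibs (n + 1) / fibs (n + 2) := div_pos hf hg
        have hd2 : fibs (n + 2) / fibs (n + 1) ≤ 2 :=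
          (div_le_iff₀ hf).mpr (fibs_succ_le (n + 1))
        have hd2' : 0 < fibs (n + 2) / fibs (n + 1) := div_pos hg hf
        have e1 : |r * (fibs (n + 1) / fibs (n + 2)) * x (n + 1)|
            = |r| * (fibs (n + 1) / fibs (n + 2)) * |x (n + 1)| := by
          rw [abs_mul, abs_mul, abs_of_pos hd1']
        have e2 : |s * (fibs (n + 2) / fibs (n + 1)) * x n|
            = |s| * (fibs (n + 2) / fibs (n + 1)) * |x n| := by
          rw [abs_mul, abs_mul, abs_of_pos hd2']
        have h1' : |r| * (fibs (n + 1) / fibs (n + 2)) * |x (n + 1)| ≤ |r| * |x (n + 1)| := by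
          have : |r| * (fibs (n + 1) / fibs (n + 2)) ≤ |r| * 1 :=
            mul_le_mul_of_nonneg_left hd1 (abs_nonneg r)
          nlinarith [abs_nonneg (x (n + 1))]
        have h2' : |s| * (fibs (n + 2) / fibs (n + 1)) * |x n| ≤ 2 * |s| * |x n| := by
          have : |s| * (fibs (n + 2) / fibs (n + 1)) ≤ |s| * 2 :=
            mul_le_mul_of_nonneg_left hd2 (abs_nonneg s)
          nlinarith [abs_nonneg (x n)]
        calc |Fhat r s x (n + 1)|
            ≤ |r * (fibs (n + 1) / fibs (n + 2)) * x (n + 1)|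
              + |s * (fibs (n + 2) / fibs (n + 1)) * x n| := abs_add_le _ _
          _ ≤ A (n + 1) + B (n + 1) := by
              rw [e1, e2]
              simp only [hA, hB, if_neg (Nat.succ_ne_zero n), Nat.add_sub_cancel]
              exact add_le_add h1' h2'
    have hptp : ∀ k, |Fhat r s x k| ^ p ≤ (A k + B k) ^ p := fun k =>
      Real.rpow_le_rpow (abs_nonneg _) (hpt k) hp0'
    obtain ⟨hABsum, hMink⟩ :=
      Real.Lp_add_le_tsum_of_nonneg hp hAnn hBnn hAsum hBsum
    have hFsum : Summable fun k => |Fhat r s x k| ^ p :=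
      Summable.of_nonneg_of_le (fun k => Real.rpow_nonneg (abs_nonneg _) p) hptp hABsum
    refine ⟨hFsum, ?_⟩
    set S : ℝ := ∑' k, |x k| ^ p with hS
    have hSnn : 0 ≤ S := tsum_nonneg fun k => Real.rpow_nonneg (abs_nonneg _) p
    have hppinv : p * (1 / p) = 1 := by field_simp
    -- value of tsum A^p
    have hAval : (∑' k, A k ^ p) ^ (1 / p) = |r| * S ^ (1 / p) := by
      have : (∑' k, A k ^ p) = |r| ^ p * S := by
        simp only [hApow]; exact tsum_mul_left
      rw [this, Real.mul_rpow (Real.rpow_nonneg (abs_nonneg _) _) hSnn,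
        ← Real.rpow_mul (abs_nonneg r), hppinv, Real.rpow_one]
    have hBval : (∑' k, B k ^ p) ^ (1 / p) = 2 * |s| * S ^ (1 / p) := by
      have hz : B 0 ^ p = 0 := by
        simp only [hB, if_pos rfl]
        exact Real.zero_rpow (ne_of_gt hp0)
      have : (∑' k, B k ^ p) = (2 * |s|) ^ p * S := by
        rw [Summable.tsum_eq_zero_add hBsum, hz, zero_add]
        simp only [hBpow]
        exact tsum_mul_left
      rw [this, Real.mul_rpow (Real.rpow_nonneg (by positivity) _) hSnn,
        ← Real.rpow_mul (by positivity), hppinv, Real.rpow_one]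
    have hmono : (∑' k, |Fhat r s x k| ^ p) ≤ ∑' k, (A k + B k) ^ p :=
      Summable.tsum_le_tsum hptp hFsum hABsum
    calc (∑' k, |Fhat r s x k| ^ p) ^ (1 / p)
        ≤ (∑' k, (A k + B k) ^ p) ^ (1 / p) :=
          Real.rpow_le_rpow (tsum_nonneg fun k => Real.rpow_nonneg (abs_nonneg _) p)
            hmono (by positivity)
      _ ≤ (∑' k, A k ^ p) ^ (1 / p) + (∑' k, B k ^ p) ^ (1 / p) := hMink
      _ = (|r| + 2 * |s|) * S ^ (1 / p) := by rw [hAval, hBval]; ring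
  · -- counterexample
    set c : ℝ := -(s / r) with hc
    refine ⟨badx c, ?_, ?_⟩
    · -- Fhat of badx vanishes except at 0
      have hzero : ∀ n, Fhat r s (badx c) (n + 1) = 0 := by
        intro n
        have hf := fibs_pos (n + 1)
        have hg := fibs_pos (n + 2)
        show r * (fibs (n + 1) / fibs (n + 2)) *
            (c * (fibs (n + 2) / fibs (n + 1)) ^ 2 * badx c n)
          + s * (fibs (n + 2) / fibs (n + 1)) * badx c n = 0
        rw [hc]
        field_simp
        ring
      apply summable_of_ne_finset_zero (s := {0})
      intro k hk
      match k, hk with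
      | n + 1, _ =>
        rw [hzero n, abs_zero, Real.zero_rpow (ne_of_gt hp0)]
    · -- badx is not p-summable
      have hone : ∀ n, 1 ≤ |badx c n| := by
        intro n
        induction n with
        | zero => simp [badx]
        | succ n ih =>
          have hf := fibs_pos (n + 1)
          have hq : 1 ≤ fibs (n + 2) / fibs (n + 1) :=
            (one_le_div hf).mpr (fibs_le_succ (n + 1))
          have hcabs : 1 ≤ |c| := by rw [hc, abs_neg]; exact h3
          show 1 ≤ |c * (fibs (n + 2) / fibs (n + 1)) ^ 2 * badx c n|
          rw [abs_mul, abs_mul, abs_of_pos (by positivity : (0:ℝ) < (fibs (n + 2) / fibs (n + 1)) ^ 2)]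
          have hsq : 1 ≤ (fibs (n + 2) / fibs (n + 1)) ^ 2 := one_le_pow₀ hq
          have ha : 1 ≤ |c| * (fibs (n + 2) / fibs (n + 1)) ^ 2 :=
            le_trans hcabs (le_mul_of_one_le_right (abs_nonneg c) hsq)
          exact le_trans ha (le_mul_of_one_le_right (by positivity) ih)
      intro hsum
      have htend := hsum.tendsto_atTop_zero
      have hev : ∀ᶠ k in atTop, |badx c k| ^ p < 1 :=
        htend.eventually_lt_const one_pos
      obtain ⟨k, hk⟩ := hev.exists
      have : (1:ℝ) ≤ |badx c k| ^ p := Real.one_le_rpow (hone k) hp0'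
      linarith
end

section
/- If |s/r| ≥ 1, then the sequence x with x_k = (1/r)(−s/r)^k f_{k+1}² belongs to ℓ_p(F̂(r,s)) (indeed F̂(r,s)x = (1,0,0,...)) but x is unbounded; hence ℓ_p(F̂(r,s)) is not contained in ℓ_∞. -/
open scoped BigOperators
open Filter

lemma tendsto_fibs_atTop : Tendsto fibs atTop atTop := by
  have h : Tendsto (fun n => fibs (n + 1)) atTop atTop :=
    tendsto_natCast_atTop_atTop.comp Nat.fib_add_two_strictMono.tendsto_atTop
  exact (tendsto_add_atTop_iff_nat 1).mp h

noncomputable def fhatFundamental (r s : ℝ) (k : ℕ) : ℝ :=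
  (1 / r) * (-s / r) ^ k * fibs (k + 1) ^ 2

lemma Fhat_fhatFundamental {r : ℝ} (hr : r ≠ 0) (s : ℝ) :
    Fhat r s (fhatFundamental r s) = fun n => if n = 0 then 1 else 0 := by
  funext n
  cases n with
  | zero => simp [Fhat, fhatFundamental, fibs, hr]
  | succ n =>
    have h₁ := (fibs_pos (n + 1)).ne'
    have h₂ := (fibs_pos (n + 2)).ne'
    simp only [Fhat, fhatFundamental, Nat.succ_ne_zero, if_false, pow_succ]
    field_simp
    ring

lemma abs_fhatFundamental (r s : ℝ) (k : ℕ) :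
    |fhatFundamental r s k| = |s / r| ^ k * fibs (k + 1) ^ 2 / |r| := by
  rw [fhatFundamental, abs_mul, abs_mul, abs_pow, abs_of_nonneg (sq_nonneg (fibs (k + 1))),
    neg_div, abs_neg, abs_div, abs_one]
  ring

lemma tendsto_abs_fhatFundamental_atTop {r s : ℝ} (hr : r ≠ 0) (h : 1 ≤ |s / r|) :
    Tendsto (fun k => |fhatFundamental r s k|) atTop atTop := by
  have hfibs : Tendsto (fun k => fibs (k + 1) / |r|) atTop atTop :=
    (tendsto_fibs_atTop.comp (tendsto_add_atTop_nat 1)).atTop_div_const (abs_pos.mpr hr)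
  refine tendsto_atTop_mono (fun k => ?_) hfibs
  rw [abs_fhatFundamental]
  have hf : 1 ≤ fibs (k + 1) := one_le_fibs (k + 1)
  gcongr
  calc fibs (k + 1) = 1 * 1 * fibs (k + 1) := by ring
    _ ≤ |s / r| ^ k * fibs (k + 1) * fibs (k + 1) := by gcongr; exact one_le_pow₀ h
    _ = |s / r| ^ k * fibs (k + 1) ^ 2 := by ring

theorem lpFhat_not_subset_linfty_general (r s : ℝ) (hr : r ≠ 0)
    (h : 1 ≤ |s / r|) (p : ℝ) (hp : 1 ≤ p) (x : ℕ → ℝ)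
    (hx : ∀ k, x k = (1 / r) * (-s / r) ^ k * (fibs (k + 1)) ^ 2) :
    (Fhat r s x = fun n => if n = 0 then 1 else 0) ∧
    Summable (fun k => |Fhat r s x k| ^ p) ∧
    ¬ ∃ M : ℝ, ∀ k, |x k| ≤ M := by
  obtain rfl : x = fhatFundamental r s := funext hx
  have hF := Fhat_fhatFundamental hr s
  refine ⟨hF, ?_, ?_⟩
  · rw [hF]
    refine summable_of_ne_finset_zero (s := {0}) fun k hk => ?_
    beta_reduce
    rw [if_neg (by simpa using hk), abs_zero, Real.zero_rpow (by linarith)]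
  · rintro ⟨M, hM⟩
    obtain ⟨k, hk⟩ := ((tendsto_abs_fhatFundamental_atTop hr h).eventually_gt_atTop M).exists
    exact (hM k).not_gt hk

theorem lpFhat_not_subset_linfty (r s : ℝ) (hr : r ≠ 0) (hs : s ≠ 0)
    (h : 1 ≤ |s / r|) (p : ℝ) (hp : 1 ≤ p) (x : ℕ → ℝ)
    (hx : ∀ k, x k = (1 / r) * (-s / r) ^ k * (fibs (k + 1)) ^ 2) :
    (Fhat r s x = fun n => if n = 0 then 1 else 0) ∧
    Summable (fun k => |Fhat r s x k| ^ p) ∧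
    ¬ ∃ M : ℝ, ∀ k, |x k| ≤ M :=
  lpFhat_not_subset_linfty_general r s hr h p hp x hx
end

section
/- The space ℓ_p(F̂(r,s)) for 1 < p < ∞ has Banach–Saks type p: every weakly null sequence (x_n) in ℓ_p(F̂(r,s)) has a subsequence (x_{k_l}) such that ‖∑_{l=0}^{n} x_{k_l}‖_{ℓ_p(F̂(r,s))} ≤ C (n+1)^{1/p} for some constant C > 0 and all n. -/
/-!
`F̂(r,s)` is linear, so `yₙ = F̂(r,s) xₙ` is a weakly null sequence in `ℓ^p` and it suffices to
prove the Banach–Saks property there. A weakly null sequence in `ℓ^p` is bounded, by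
Banach–Steinhaus applied to the functionals `g ↦ ∑ gᵢ yᵢ` on `ℓ^q` (whose norm is `‖y‖`, as the
element `sign(y) |y|^(p-1)` of `ℓ^q` shows), and it is coordinatewise null. A gliding hump then
yields a subsequence `y_{φ l}` that is, up to an error `2^(-l)`, supported on consecutive disjoint
blocks of indices. On disjointly supported vectors the `p`-th power of the `ℓ^p` norm is additive,
so `‖∑_{l ≤ n} y_{φ l}‖ ≤ M (n+1)^(1/p) + 2` where `M` bounds the `‖yₙ‖`.
-/

open scoped BigOperators
open Filter

open Topology Function
open scoped ENNReal lp

namespace lp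

section Duality

variable {α : Type*} {p q : ℝ≥0∞}

theorem summable_norm_mul_apply (hpq : p.toReal.HolderConjugate q.toReal) (y : ℓ^p(α, ℝ))
    (g : ℓ^q(α, ℝ)) : Summable fun i => ‖g i * y i‖ :=
  (lp.summable_mul hpq y g).congr fun i => by rw [norm_mul, mul_comm]

theorem norm_tsum_mul_le (hpq : p.toReal.HolderConjugate q.toReal) (y : ℓ^p(α, ℝ))
    (g : ℓ^q(α, ℝ)) : ‖∑' i, g i * y i‖ ≤ ‖y‖ * ‖g‖ :=
  calc ‖∑' i, g i * y i‖ ≤ ∑' i, ‖g i * y i‖ :=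
        norm_tsum_le_tsum_norm (summable_norm_mul_apply hpq y g)
    _ = ∑' i, ‖y i‖ * ‖g i‖ := by simp only [norm_mul, mul_comm]
    _ ≤ ‖y‖ * ‖g‖ := lp.tsum_mul_le_mul_norm' hpq y g

variable [Fact (1 ≤ q)]

noncomputable def pairing (hpq : p.toReal.HolderConjugate q.toReal) (y : ℓ^p(α, ℝ)) :
    ℓ^q(α, ℝ) →L[ℝ] ℝ :=
  LinearMap.mkContinuous
    { toFun := fun g => ∑' i, g i * y i
      map_add' := fun g h => by
        simp only [coeFn_add, Pi.add_apply, add_mul]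
        exact (summable_norm_mul_apply hpq y g).of_norm.tsum_add
          (summable_norm_mul_apply hpq y h).of_norm
      map_smul' := fun c g => by
        simp only [coeFn_smul, Pi.smul_apply, smul_eq_mul, mul_assoc, RingHom.id_apply]
        exact tsum_mul_left }
    ‖y‖ (norm_tsum_mul_le hpq y)

omit [Fact (1 ≤ q)] in
theorem exists_tsum_mul_eq_norm_rpow (hpq : p.toReal.HolderConjugate q.toReal)
    (y : ℓ^p(α, ℝ)) :
    ∃ g : ℓ^q(α, ℝ), ∑' i, g i * y i = ‖y‖ ^ p.toReal ∧ ‖g‖ = ‖y‖ ^ (p.toReal - 1) := by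
  set g : α → ℝ := fun i => SignType.sign (y i) * ‖y i‖ ^ (p.toReal - 1)
  have hp_sub : p.toReal - 1 ≠ 0 := (sub_pos.2 hpq.lt).ne'
  have norm_g : ∀ i, ‖g i‖ = ‖y i‖ ^ (p.toReal - 1) := fun i => by
    rcases lt_trichotomy (y i) 0 with h | h | h <;>
      simp [g, h, sign_neg, sign_pos, Real.zero_rpow hp_sub,
        abs_of_nonneg (Real.rpow_nonneg (abs_nonneg _) _)]
  have norm_g_rpow : ∀ i, ‖g i‖ ^ q.toReal = ‖y i‖ ^ p.toReal := fun i => by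
    rw [norm_g, ← Real.rpow_mul (norm_nonneg _), hpq.sub_one_mul_conj]
  have g_mul : ∀ i, g i * y i = ‖y i‖ ^ p.toReal := fun i => by
    calc g i * y i = ‖y i‖ ^ (p.toReal - 1) * (SignType.sign (y i) * y i) := by ring
      _ = ‖y i‖ ^ (p.toReal - 1 + 1) := by
        rw [sign_mul_self, ← Real.norm_eq_abs,
          Real.rpow_add_one' (norm_nonneg _) (by simpa using hpq.ne_zero)]
      _ = ‖y i‖ ^ p.toReal := by rw [sub_add_cancel]
  have hg : Memℓp g q :=
    memℓp_gen <| ((lp.memℓp y).summable hpq.pos).congr fun i => (norm_g_rpow i).symm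
  refine ⟨⟨g, hg⟩, ?_, ?_⟩
  · exact (tsum_congr g_mul).trans (lp.norm_rpow_eq_tsum hpq.pos y).symm
  · rw [lp.norm_eq_tsum_rpow hpq.symm.pos]
    change (∑' i, ‖g i‖ ^ q.toReal) ^ (1 / q.toReal) = _
    simp_rw [norm_g_rpow, ← lp.norm_rpow_eq_tsum hpq.pos y]
    rw [← Real.rpow_mul (lp.norm_nonneg' y), mul_one_div, hpq.div_conj_eq_sub_one]

theorem norm_le_opNorm_pairing (hpq : p.toReal.HolderConjugate q.toReal) (y : ℓ^p(α, ℝ)) :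
    ‖y‖ ≤ ‖pairing hpq y‖ := by
  obtain ⟨g, hgy, hg⟩ := exists_tsum_mul_eq_norm_rpow hpq y
  rcases (lp.norm_nonneg' y).eq_or_lt with hy | hy
  · rw [← hy]; exact norm_nonneg _
  refine le_of_mul_le_mul_left ?_ (Real.rpow_pos_of_pos hy (p.toReal - 1))
  calc ‖y‖ ^ (p.toReal - 1) * ‖y‖ = ‖y‖ ^ p.toReal := by
        rw [← Real.rpow_add_one hy.ne', sub_add_cancel]
    _ = pairing hpq y g := hgy.symm
    _ ≤ ‖pairing hpq y g‖ := Real.le_norm_self _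
    _ ≤ ‖pairing hpq y‖ * ‖g‖ := (pairing hpq y).le_opNorm g
    _ = ‖y‖ ^ (p.toReal - 1) * ‖pairing hpq y‖ := by rw [hg, mul_comm]

theorem exists_norm_le_of_weakly_bounded {ι : Type*}
    (hpq : p.toReal.HolderConjugate q.toReal) (y : ι → ℓ^p(α, ℝ))
    (h : ∀ g : ℓ^q(α, ℝ), ∃ C, ∀ n, ‖∑' i, g i * y n i‖ ≤ C) : ∃ C, ∀ n, ‖y n‖ ≤ C := by
  obtain ⟨C, hC⟩ := banach_steinhaus (g := fun n => pairing hpq (y n)) h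
  exact ⟨C, fun n => (norm_le_opNorm_pairing hpq (y n)).trans (hC n)⟩

omit [Fact (1 ≤ q)] in
theorem tendsto_apply_of_tendsto_tsum_mul {ι : Type*} {l : Filter ι} (y : ι → ℓ^p(α, ℝ))
    (h : ∀ g : ℓ^q(α, ℝ), Tendsto (fun n => ∑' i, g i * y n i) l (𝓝 0)) (i : α) :
    Tendsto (fun n => y n i) l (𝓝 0) := by
  classical
  simpa [Pi.single_apply] using h (lp.single q i 1)

end Duality

section GlidingHump

variable {α E : Type*} [NormedAddCommGroup E] {p : ℝ≥0∞}

theorem norm_sum_rpow_of_pairwise_disjoint {ι : Type*} (hp : 0 < p.toReal)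
    (f : ι → ℓ^p(α, E)) (t : Finset ι)
    (hf : (t : Set ι).Pairwise (Disjoint on fun l => support (f l))) :
    ‖∑ l ∈ t, f l‖ ^ p.toReal = ∑ l ∈ t, ‖f l‖ ^ p.toReal := by
  have pointwise : ∀ i, ‖∑ l ∈ t, f l i‖ ^ p.toReal = ∑ l ∈ t, ‖f l i‖ ^ p.toReal := by
    intro i
    by_cases h : ∃ l₀ ∈ t, f l₀ i ≠ 0
    · obtain ⟨l₀, hl₀, hi⟩ := h
      have others : ∀ l ∈ t, l ≠ l₀ → f l i = 0 := fun l hl hne =>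
        notMem_support.1 fun hl' =>
          Set.disjoint_left.1 (hf hl hl₀ hne) hl' (mem_support.2 hi)
      rw [Finset.sum_eq_single_of_mem l₀ hl₀ others, Finset.sum_eq_single_of_mem l₀ hl₀
        fun l hl hne => by simp [others l hl hne, Real.zero_rpow hp.ne']]
    · push Not at h
      rw [Finset.sum_eq_zero h,
        Finset.sum_eq_zero fun l hl => by simp [h l hl, Real.zero_rpow hp.ne']]
      simp [Real.zero_rpow hp.ne']
  calc ‖∑ l ∈ t, f l‖ ^ p.toReal = ∑' i, ∑ l ∈ t, ‖f l i‖ ^ p.toReal := by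
        simp_rw [lp.norm_rpow_eq_tsum hp, lp.coeFn_sum, Finset.sum_apply, pointwise]
    _ = ∑ l ∈ t, ‖f l‖ ^ p.toReal := by
        rw [Summable.tsum_finsetSum fun l _ => (lp.memℓp (f l)).summable hp]
        simp_rw [lp.norm_rpow_eq_tsum hp]

variable [DecidableEq α]

theorem support_sum_single_subset (f : ℓ^p(α, E)) (s : Finset α) :
    support ⇑(∑ i ∈ s, lp.single p i (f i)) ⊆ s := by
  intro i hi
  by_contra hs
  simp only [mem_support, lp.coeFn_sum, Finset.sum_apply, lp.coeFn_single,
    Finset.sum_pi_single] at hi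
  exact hi (if_neg hs)

theorem norm_sum_single_le (hp : 0 < p.toReal) (f : ℓ^p(α, E)) (s : Finset α) :
    ‖∑ i ∈ s, lp.single p i (f i)‖ ≤ ‖f‖ := by
  refine (Real.rpow_le_rpow_iff (lp.norm_nonneg' _) (lp.norm_nonneg' f) hp).1 ?_
  rw [lp.norm_sum_single hp]
  exact lp.sum_rpow_le_norm_rpow hp f s

theorem norm_sum_blocks_le (hp : 0 < p.toReal) {N : ℕ → ℕ} (hN : Monotone N)
    (f : ℕ → ℓ^p(ℕ, E)) {M : ℝ} (hM : ∀ l, ‖f l‖ ≤ M) (t : Finset ℕ) :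
    ‖∑ l ∈ t, ∑ i ∈ Finset.Ico (N l) (N (l + 1)), lp.single p i (f l i)‖ ≤
      M * (t.card : ℝ) ^ (1 / p.toReal) := by
  set block := fun l => ∑ i ∈ Finset.Ico (N l) (N (l + 1)), lp.single p i (f l i)
  have hM₀ : 0 ≤ M := (lp.norm_nonneg' _).trans (hM 0)
  have disjoint : (t : Set ℕ).Pairwise (Disjoint on fun l => support (block l)) :=
    fun l _ l' _ hne => by
      refine (hN.pairwise_disjoint_on_Ico_succ hne).mono ?_ ?_ <;>
        exact (support_sum_single_subset _ _).trans (Finset.coe_Ico _ _).le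
  refine (Real.rpow_le_rpow_iff (lp.norm_nonneg' _) (by positivity) hp).1 ?_
  calc ‖∑ l ∈ t, block l‖ ^ p.toReal = ∑ l ∈ t, ‖block l‖ ^ p.toReal :=
        norm_sum_rpow_of_pairwise_disjoint hp block t disjoint
    _ ≤ ∑ _l ∈ t, M ^ p.toReal := Finset.sum_le_sum fun l _ =>
        Real.rpow_le_rpow (lp.norm_nonneg' _) ((norm_sum_single_le hp _ _).trans (hM l)) hp.le
    _ = (M * (t.card : ℝ) ^ (1 / p.toReal)) ^ p.toReal := by
        rw [Finset.sum_const, nsmul_eq_mul, Real.mul_rpow hM₀ (by positivity), one_div,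
          Real.rpow_inv_rpow (by positivity) hp.ne', mul_comm]

variable [Fact (1 ≤ p)]

theorem exists_block_approx (hp : p ≠ ∞) {y : ℕ → ℓ^p(ℕ, E)}
    (hy : ∀ i, Tendsto (fun n => y n i) atTop (𝓝 0)) {ε : ℝ} (hε : 0 < ε) (a b : ℕ) :
    ∃ n m, a < n ∧ b ≤ m ∧ ‖y n - ∑ i ∈ Finset.Ico b m, lp.single p i (y n i)‖ ≤ ε := by
  have head : Tendsto (fun n => ∑ i ∈ Finset.range b, lp.single p i (y n i)) atTop (𝓝 0) := by
    simpa using tendsto_finsetSum (Finset.range b) fun i _ =>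
      ((isometry_single (E := fun _ => E) (p := p) i).continuous.tendsto 0).comp (hy i)
  obtain ⟨n, hn_head, hn⟩ :=
    ((head.eventually (Metric.ball_mem_nhds 0 (half_pos hε))).and (eventually_gt_atTop a)).exists
  obtain ⟨m, hm_tail, hm⟩ := (((lp.hasSum_single hp (y n)).tendsto_sum_nat.eventually
    (Metric.ball_mem_nhds (y n) (half_pos hε))).and (eventually_ge_atTop b)).exists
  refine ⟨n, m, hn, hm, ?_⟩
  rw [dist_zero_right] at hn_head
  rw [dist_eq_norm'] at hm_tail
  calc ‖y n - ∑ i ∈ Finset.Ico b m, lp.single p i (y n i)‖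
      = ‖(y n - ∑ i ∈ Finset.range m, lp.single p i (y n i)) +
          ∑ i ∈ Finset.range b, lp.single p i (y n i)‖ := by
        rw [Finset.sum_Ico_eq_sub _ hm]; abel_nf
    _ ≤ ε := (norm_add_le _ _).trans (by linarith)

theorem exists_strictMono_block_approx (hp : p ≠ ∞) {y : ℕ → ℓ^p(ℕ, E)}
    (hy : ∀ i, Tendsto (fun n => y n i) atTop (𝓝 0)) {ε : ℕ → ℝ} (hε : ∀ l, 0 < ε l) :
    ∃ φ : ℕ → ℕ, StrictMono φ ∧ ∃ N : ℕ → ℕ, Monotone N ∧ ∀ l,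
      ‖y (φ l) - ∑ i ∈ Finset.Ico (N l) (N (l + 1)), lp.single p i (y (φ l) i)‖ ≤ ε l := by
  choose index right index_gt right_ge approx using
    fun l (st : ℕ × ℕ) => exists_block_approx hp hy (hε l) st.1 st.2
  -- `state (l + 1) = (φ l, N (l + 1))`, and `N 0 = 0`
  let state : ℕ → ℕ × ℕ := fun l =>
    Nat.rec (motive := fun _ => ℕ × ℕ) (0, 0) (fun l st => (index l st, right l st)) l
  exact ⟨fun l => (state (l + 1)).1, strictMono_nat_of_lt_succ fun l => index_gt _ _,
    fun l => (state l).2, monotone_nat_of_le_succ fun l => right_ge _ _,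
    fun l => approx l (state l)⟩

theorem exists_strictMono_norm_sum_le (hp : p ≠ ∞) {y : ℕ → ℓ^p(ℕ, E)}
    (hy : ∀ i, Tendsto (fun n => y n i) atTop (𝓝 0)) {M : ℝ} (hM : ∀ n, ‖y n‖ ≤ M) :
    ∃ C, 0 < C ∧ ∃ φ : ℕ → ℕ, StrictMono φ ∧ ∀ n : ℕ,
      ‖∑ l ∈ Finset.range (n + 1), y (φ l)‖ ≤ C * ((n : ℝ) + 1) ^ (1 / p.toReal) := by
  have hp₀ : 0 < p.toReal := ENNReal.toReal_pos (zero_lt_one.trans_le Fact.out).ne' hp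
  have hM₀ : 0 ≤ M := (norm_nonneg _).trans (hM 0)
  obtain ⟨φ, hφ, N, hN, approx⟩ :=
    exists_strictMono_block_approx hp hy (ε := fun l => (1 / 2 : ℝ) ^ l) fun l => by positivity
  refine ⟨M + 2, by linarith, φ, hφ, fun n => ?_⟩
  set block := fun l => ∑ i ∈ Finset.Ico (N l) (N (l + 1)), lp.single p i (y (φ l) i)
  have blocks : ‖∑ l ∈ Finset.range (n + 1), block l‖ ≤ M * ((n : ℝ) + 1) ^ (1 / p.toReal) := by
    simpa using norm_sum_blocks_le hp₀ hN (fun l => y (φ l)) (fun l => hM (φ l))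
      (Finset.range (n + 1))
  have errors : ‖∑ l ∈ Finset.range (n + 1), (y (φ l) - block l)‖ ≤ 2 :=
    calc _ ≤ ∑ l ∈ Finset.range (n + 1), (1 / 2 : ℝ) ^ l :=
          norm_sum_le_of_le _ fun l _ => approx l
      _ ≤ 2 := sum_geometric_two_le _
  have one_le : 1 ≤ ((n : ℝ) + 1) ^ (1 / p.toReal) :=
    Real.one_le_rpow (by linarith [n.cast_nonneg (α := ℝ)]) (by positivity)
  calc ‖∑ l ∈ Finset.range (n + 1), y (φ l)‖
      = ‖∑ l ∈ Finset.range (n + 1), block l +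
          ∑ l ∈ Finset.range (n + 1), (y (φ l) - block l)‖ := by
        rw [← Finset.sum_add_distrib]; simp
    _ ≤ M * ((n : ℝ) + 1) ^ (1 / p.toReal) + 2 := (norm_add_le _ _).trans (add_le_add blocks errors)
    _ ≤ (M + 2) * ((n : ℝ) + 1) ^ (1 / p.toReal) := by nlinarith

end GlidingHump

theorem exists_strictMono_norm_sum_le_of_tendsto_tsum_mul {p q : ℝ≥0∞} [Fact (1 ≤ p)]
    [Fact (1 ≤ q)] (hpq : p.toReal.HolderConjugate q.toReal) (y : ℕ → ℓ^p(ℕ, ℝ))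
    (hy : ∀ g : ℓ^q(ℕ, ℝ), Tendsto (fun n => ∑' i, g i * y n i) atTop (𝓝 0)) :
    ∃ C, 0 < C ∧ ∃ φ : ℕ → ℕ, StrictMono φ ∧ ∀ n : ℕ,
      ‖∑ l ∈ Finset.range (n + 1), y (φ l)‖ ≤ C * ((n : ℝ) + 1) ^ (1 / p.toReal) := by
  obtain ⟨M, hM⟩ := exists_norm_le_of_weakly_bounded hpq y fun g => by
    obtain ⟨C, hC⟩ := (hy g).norm.bddAbove_range
    exact ⟨C, fun n => hC (Set.mem_range_self n)⟩
  exact exists_strictMono_norm_sum_le (ENNReal.toReal_pos_iff.1 hpq.pos).2.ne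
    (tendsto_apply_of_tendsto_tsum_mul y hy) hM

end lp

theorem Fhat_finset_sum (r s : ℝ) {ι : Type*} (t : Finset ι) (x : ι → ℕ → ℝ) (k : ℕ) :
    Fhat r s (fun i => ∑ l ∈ t, x l i) k = ∑ l ∈ t, Fhat r s (x l) k := by
  cases k <;> simp [Fhat, Finset.mul_sum, Finset.sum_add_distrib]

theorem banach_saks_type_p_general (r s : ℝ) (p q : ℝ)
    (hp : 1 < p) (hq : q = p / (p - 1)) (x : ℕ → ℕ → ℝ)
    (hmem : ∀ n, Summable fun k => |Fhat r s (x n) k| ^ p)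
    (hweak : ∀ g : ℕ → ℝ, Summable (fun k => |g k| ^ q) →
      Tendsto (fun n => ∑' k, g k * Fhat r s (x n) k) atTop (nhds 0)) :
    ∃ C : ℝ, 0 < C ∧ ∃ φ : ℕ → ℕ, StrictMono φ ∧ ∀ n : ℕ,
      (∑' k, |Fhat r s (fun i => ∑ l ∈ Finset.range (n + 1), x (φ l) i) k| ^ p) ^ (1 / p)
        ≤ C * ((n : ℝ) + 1) ^ (1 / p) := by
  have hpq : p.HolderConjugate q := (Real.holderConjugate_iff_eq_conjExponent hp).2 hq
  have hp' : (ENNReal.ofReal p).toReal = p := ENNReal.toReal_ofReal hpq.nonneg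
  have hq' : (ENNReal.ofReal q).toReal = q := ENNReal.toReal_ofReal hpq.symm.nonneg
  have : Fact (1 ≤ ENNReal.ofReal p) := ⟨ENNReal.one_le_ofReal.2 hpq.lt.le⟩
  have : Fact (1 ≤ ENNReal.ofReal q) := ⟨ENNReal.one_le_ofReal.2 hpq.symm.lt.le⟩
  let y : ℕ → ℓ^(ENNReal.ofReal p)(ℕ, ℝ) := fun n =>
    ⟨Fhat r s (x n), memℓp_gen (by simpa [hp'] using hmem n)⟩
  obtain ⟨C, hC, φ, hφ, hbound⟩ :=
    lp.exists_strictMono_norm_sum_le_of_tendsto_tsum_mul (q := ENNReal.ofReal q)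
      (by rwa [hp', hq']) y fun g =>
      hweak g (by simpa [hq'] using (lp.memℓp g).summable (by rw [hq']; exact hpq.symm.pos))
  refine ⟨C, hC, φ, hφ, fun n => ?_⟩
  rw [hp'] at hbound
  convert hbound n using 1
  simp only [lp.norm_eq_tsum_rpow (by rw [hp']; exact hpq.pos), hp', lp.coeFn_sum,
    Finset.sum_apply, Real.norm_eq_abs, Fhat_finset_sum]
  rfl

theorem banach_saks_type_p (r s : ℝ) (hr : r ≠ 0) (hs : s ≠ 0) (p q : ℝ)
    (hp : 1 < p) (hq : q = p / (p - 1)) (x : ℕ → ℕ → ℝ)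
    (hmem : ∀ n, Summable fun k => |Fhat r s (x n) k| ^ p)
    (hweak : ∀ g : ℕ → ℝ, Summable (fun k => |g k| ^ q) →
      Tendsto (fun n => ∑' k, g k * Fhat r s (x n) k) atTop (nhds 0)) :
    ∃ C : ℝ, 0 < C ∧ ∃ φ : ℕ → ℕ, StrictMono φ ∧ ∀ n : ℕ,
      (∑' k, |Fhat r s (fun i => ∑ l ∈ Finset.range (n + 1), x (φ l) i) k| ^ p) ^ (1 / p)
        ≤ C * ((n : ℝ) + 1) ^ (1 / p) :=
  banach_saks_type_p_general r s p q hp hq x hmem hweak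
end
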